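/- arXiv:1705.10042 — 2 statements merged into one kernel-verified Lean document; each statement's English description precedes it below -/
import Mathlib

section
/- For coprime nonnegative integers m₁, n₁ (with m₁ + n₁ ≥ 1) and m₂, n₂ (with m₂ + n₂ ≥ 1), suppose n₂/(m₂+n₂) < 1/2 < n₁/(m₁+n₁). Then the binary-expansion merge of the sequences A = A_{m₁,n₁} (m₁ ones then n₁ zeros) and B = A_{m₂,n₂} (m₂ ones then n₂ zeros) is the sequence 1^{m₁} 0^{n₁−m₁} 1^{n₂} 0^{m₁} 1^{m₂−n₂} 0^{n₂} of length m₁+n₁+m₂+n₂, where the zeros in the blocks 0^{n₁−m₁} and 0^{m₁} come from A (being positions m₁+1,…,n₁ and n₁+1,…,m₁+n₁ of A respectively), the 1^{n₂} and 1^{m₂−n₂} blocks come from B (positions 1,…,n₂ and n₂+1,…,m₂), and the final 0^{n₂} comes from B. -/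
/-- The binary-expansion key `b_A(i)` of position `i` (0-indexed) in the simple
sequence `A_{m,n}` of length `h = m + n` (`m` ones then `n` zeros): tracing the
`(F,V⁻¹)`-diagram in reverse from `i`, the `ℓ`-th reversed step lands at
position `(i + ℓ·m) mod h`, and contributes binary digit `1` exactly when that
position carries a one (i.e. is `< m`). -/
noncomputable def simpleKey (m h : ℕ) (i : ℕ) : ℝ :=
  ∑' ℓ : ℕ, if (i + (ℓ + 1) * m) % h < m then ((1 : ℝ) / 2) ^ (ℓ + 1) else 0

namespace SKey

lemma summable_pow : Summable (fun ℓ : ℕ => ((1:ℝ)/2) ^ (ℓ+1)) := by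
  have := (summable_geometric_of_lt_one (by norm_num : (0:ℝ) ≤ 1/2) (by norm_num)).mul_left (1/2)
  simpa [pow_succ, mul_comm] using this

lemma geom_sum : ∑' ℓ : ℕ, ((1:ℝ)/2) ^ (ℓ+1) = 1 := by
  have h := tsum_geometric_of_lt_one (by norm_num : (0:ℝ) ≤ 1/2) (by norm_num)
  calc ∑' ℓ : ℕ, ((1:ℝ)/2) ^ (ℓ+1) = ∑' ℓ : ℕ, ((1:ℝ)/2) * (1/2)^ℓ := by
        congr 1; ext ℓ; ring
    _ = (1/2) * ∑' ℓ : ℕ, ((1:ℝ)/2) ^ ℓ := by rw [tsum_mul_left]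
    _ = 1 := by rw [h]; norm_num

/-- the summand -/
noncomputable def f (m h i : ℕ) (ℓ : ℕ) : ℝ :=
  if (i + (ℓ + 1) * m) % h < m then ((1 : ℝ) / 2) ^ (ℓ + 1) else 0

lemma key_eq (m h i : ℕ) : simpleKey m h i = ∑' ℓ, f m h i ℓ := rfl

lemma f_nonneg (m h i ℓ : ℕ) : 0 ≤ f m h i ℓ := by
  unfold f; split <;> positivity

lemma f_le (m h i ℓ : ℕ) : f m h i ℓ ≤ ((1:ℝ)/2)^(ℓ+1) := by
  unfold f; split
  · exact le_refl _
  · positivity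

lemma summable_f (m h i : ℕ) : Summable (f m h i) :=
  Summable.of_nonneg_of_le (f_nonneg m h i) (f_le m h i) summable_pow

end SKey

namespace SKey

lemma key_nonneg (m h i : ℕ) : 0 ≤ simpleKey m h i := by
  rw [key_eq]; exact tsum_nonneg (f_nonneg m h i)

lemma key_le_one (m h i : ℕ) : simpleKey m h i ≤ 1 := by
  rw [key_eq, ← geom_sum]
  exact Summable.tsum_le_tsum (f_le m h i) (summable_f m h i) summable_pow

/-- if pointwise `f ≤ g` with a defect `ε` at one index, the tsums differ by `ε`. -/
lemma tsum_add_single_le {f g : ℕ → ℝ} (hf : Summable f) (hg : Summable g)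
    (hle : ∀ ℓ, f ℓ ≤ g ℓ) (k : ℕ) (ε : ℝ) (hk : f k + ε ≤ g k) :
    ∑' ℓ, f ℓ + ε ≤ ∑' ℓ, g ℓ := by
  have h1 : ∑' ℓ, (f ℓ + if ℓ = k then ε else 0) = ∑' ℓ, f ℓ + ε := by
    rw [Summable.tsum_add hf (summable_of_ne_finset_zero (s := {k}) (by intro b hb; simp at hb; simp [hb]))]
    simp [tsum_ite_eq]
  rw [← h1]
  apply Summable.tsum_le_tsum _ (hf.add (summable_of_ne_finset_zero (s := {k}) (by intro b hb; simp at hb; simp [hb]))) hg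
  intro ℓ
  by_cases hc : ℓ = k
  · subst hc; simpa using hk
  · simpa [hc] using hle ℓ

lemma key_zero_left (h i : ℕ) : simpleKey 0 h i = 0 := by
  unfold simpleKey; simp

lemma key_one_one (i : ℕ) : simpleKey 1 1 i = 1 := by
  unfold simpleKey
  have : (∑' ℓ : ℕ, if (i + (ℓ+1) * 1) % 1 < 1 then ((1:ℝ)/2)^(ℓ+1) else 0)
      = ∑' ℓ : ℕ, ((1:ℝ)/2)^(ℓ+1) := tsum_congr (by intro ℓ; simp [Nat.mod_one])
  rw [this, geom_sum]

/-- recursion -/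
lemma key_rec (m h i : ℕ) :
    simpleKey m h i
      = ((if (i + m) % h < m then (1:ℝ) else 0) + simpleKey m h ((i + m) % h)) / 2 := by
  rw [key_eq, Summable.tsum_eq_zero_add (summable_f m h i)]
  have h0 : f m h i 0 = (if (i + m) % h < m then (1:ℝ) else 0) / 2 := by
    unfold f; simp only [zero_add, one_mul]; split <;> norm_num
  have h1 : ∀ ℓ : ℕ, f m h i (ℓ + 1) = (1/2) * f m h ((i+m)%h) ℓ := by
    intro ℓ
    unfold f
    have : ((i + m) % h + (ℓ + 1) * m) % h = (i + (ℓ + 1 + 1) * m) % h := by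
      conv_lhs => rw [Nat.mod_add_mod]
      congr 1; ring
    rw [this]
    split <;> [skip; simp]
    rw [pow_succ]; ring
  calc f m h i 0 + ∑' ℓ, f m h i (ℓ+1)
      = (if (i + m) % h < m then (1:ℝ) else 0) / 2 + ∑' ℓ, (1/2) * f m h ((i+m)%h) ℓ := by
        rw [h0]; congr 1; exact tsum_congr h1
    _ = _ := by rw [tsum_mul_left, ← key_eq]; ring

end SKey

namespace SKey


lemma exists_step (m h : ℕ) (hco : Nat.Coprime m h) (hh : 0 < h) (x r : ℕ) (hr : r < h) :
    ∃ t, 1 ≤ t ∧ (x + t * m) % h = r := by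
  haveI : NeZero h := ⟨by omega⟩
  set u := ZMod.unitOfCoprime m hco with hu
  have hum : ((u : (ZMod h)ˣ) : ZMod h) = (m : ZMod h) := ZMod.coe_unitOfCoprime m hco
  set z : ZMod h := ((r : ZMod h) - (x : ZMod h)) * (↑u⁻¹ : (ZMod h)ˣ) with hz
  refine ⟨z.val + h, by omega, ?_⟩
  have hcast : ((x + (z.val + h) * m : ℕ) : ZMod h) = (r : ZMod h) := by
    push_cast
    rw [ZMod.natCast_val, ZMod.cast_id, ZMod.natCast_self, add_zero, hz, ← hum]
    have : ((r : ZMod h) - (x : ZMod h)) * (↑u⁻¹ : (ZMod h)ˣ) * (↑u : ZMod h)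
        = (r : ZMod h) - (x : ZMod h) := by
      rw [mul_assoc, Units.inv_mul, mul_one]
    rw [this]; ring
  have := (ZMod.natCast_eq_natCast_iff _ _ _).mp hcast
  unfold Nat.ModEq at this
  rw [this, Nat.mod_eq_of_lt hr]


lemma div_step (m h u : ℕ) (hm : m < h) :
    (u + m) / h = u / h + (if (u + m) % h < m then 1 else 0) := by
  have hh : 0 < h := by omega
  obtain ⟨q, r, hrh, hu⟩ : ∃ q r, r < h ∧ u = h * q + r :=
    ⟨u / h, u % h, Nat.mod_lt _ hh, (Nat.div_add_mod u h).symm⟩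
  subst hu
  have d3 : (h * q + r) / h = q := by rw [Nat.mul_add_div hh, Nat.div_eq_of_lt hrh]; omega
  rcases Nat.lt_or_ge (r + m) h with hc | hc
  · have e1 : h * q + r + m = h * q + (r + m) := by omega
    have d1 : (h * q + (r + m)) / h = q := by
      rw [Nat.mul_add_div hh, Nat.div_eq_of_lt hc]; omega
    have d2 : (h * q + (r + m)) % h = r + m := by
      rw [Nat.mul_add_mod, Nat.mod_eq_of_lt hc]
    rw [e1, d1, d2, d3, if_neg (by omega)]; omega
  · have e1 : h * q + r + m = h * (q + 1) + (r + m - h) := by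
      have : h * (q + 1) = h * q + h := by ring
      omega
    have d1 : (h * (q + 1) + (r + m - h)) / h = q + 1 := by
      rw [Nat.mul_add_div hh, Nat.div_eq_of_lt (by omega)]
    have d2 : (h * (q + 1) + (r + m - h)) % h = r + m - h := by
      rw [Nat.mul_add_mod, Nat.mod_eq_of_lt (by omega)]
    rw [e1, d1, d2, d3, if_pos (by omega)]
end SKey

namespace SKey

lemma key_strictMono (m h : ℕ) (hm : m < h) (hco : Nat.Coprime m h) {i j : ℕ}
    (hij : i < j) (hjh : j < h) : simpleKey m h i < simpleKey m h j := by
  have hh : 0 < h := by omega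
  set C : ℕ → ℕ := fun ℓ => (j + ℓ * m) / h - (i + ℓ * m) / h with hC
  have hCle : ∀ ℓ, (i + ℓ * m) / h ≤ (j + ℓ * m) / h :=
    fun ℓ => Nat.div_le_div_right (by omega)
  have hC1 : ∀ ℓ, C ℓ ≤ 1 := by
    intro ℓ
    have l2 : (j + ℓ * m) / h ≤ (i + ℓ * m + h) / h := Nat.div_le_div_right (by omega)
    rw [Nat.add_div_right _ hh] at l2
    simp only [hC]; omega
  have hC0 : C 0 = 0 := by
    simp only [hC, Nat.zero_mul, Nat.add_zero]
    rw [Nat.div_eq_of_lt hjh, Nat.div_eq_of_lt (show i < h by omega)]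
  -- pointwise identity
  have hfd : ∀ ℓ, f m h j ℓ - f m h i ℓ
      = ((C (ℓ+1) : ℝ) - (C ℓ : ℝ)) * ((1:ℝ)/2)^(ℓ+1) := by
    intro ℓ
    have ee : ∀ x : ℕ, x + (ℓ + 1) * m = x + ℓ * m + m := by intro x; ring
    have di := div_step m h (i + ℓ * m) hm
    have dj := div_step m h (j + ℓ * m) hm
    have fi : f m h i ℓ
        = (((i + (ℓ+1) * m) / h : ℕ) : ℝ) * ((1:ℝ)/2)^(ℓ+1)
          - (((i + ℓ * m) / h : ℕ) : ℝ) * ((1:ℝ)/2)^(ℓ+1) := by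
      unfold f
      rw [ee i, di]
      split <;> push_cast <;> ring
    have fj : f m h j ℓ
        = (((j + (ℓ+1) * m) / h : ℕ) : ℝ) * ((1:ℝ)/2)^(ℓ+1)
          - (((j + ℓ * m) / h : ℕ) : ℝ) * ((1:ℝ)/2)^(ℓ+1) := by
      unfold f
      rw [ee j, dj]
      split <;> push_cast <;> ring
    have c1 : ((C (ℓ+1) : ℕ) : ℝ)
        = (((j + (ℓ+1) * m) / h : ℕ) : ℝ) - (((i + (ℓ+1) * m) / h : ℕ) : ℝ) := by
      simp only [hC]; rw [Nat.cast_sub (hCle (ℓ+1))]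
    have c0 : ((C ℓ : ℕ) : ℝ)
        = (((j + ℓ * m) / h : ℕ) : ℝ) - (((i + ℓ * m) / h : ℕ) : ℝ) := by
      simp only [hC]; rw [Nat.cast_sub (hCle ℓ)]
    rw [fi, fj, c1, c0]; ring
  -- summabilities
  have hS1 : Summable (fun ℓ : ℕ => (C (ℓ+1) : ℝ) * ((1:ℝ)/2)^(ℓ+1)) := by
    apply Summable.of_nonneg_of_le (fun ℓ => by positivity)
      (fun ℓ => ?_) summable_pow
    have := hC1 (ℓ+1)
    calc (C (ℓ+1) : ℝ) * ((1:ℝ)/2)^(ℓ+1) ≤ 1 * ((1:ℝ)/2)^(ℓ+1) := by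
          apply mul_le_mul_of_nonneg_right _ (by positivity)
          exact_mod_cast this
      _ = ((1:ℝ)/2)^(ℓ+1) := one_mul _
  have hS2 : Summable (fun ℓ : ℕ => (C ℓ : ℝ) * ((1:ℝ)/2)^(ℓ+1)) := by
    apply Summable.of_nonneg_of_le (fun ℓ => by positivity)
      (fun ℓ => ?_) summable_pow
    have := hC1 ℓ
    calc (C ℓ : ℝ) * ((1:ℝ)/2)^(ℓ+1) ≤ 1 * ((1:ℝ)/2)^(ℓ+1) := by
          apply mul_le_mul_of_nonneg_right _ (by positivity)
          exact_mod_cast this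
      _ = ((1:ℝ)/2)^(ℓ+1) := one_mul _
  set S1 := ∑' ℓ : ℕ, (C (ℓ+1) : ℝ) * ((1:ℝ)/2)^(ℓ+1) with hS1d
  -- difference of keys
  have hdiff : simpleKey m h j - simpleKey m h i = S1 / 2 := by
    have e1 : simpleKey m h j - simpleKey m h i = ∑' ℓ, (f m h j ℓ - f m h i ℓ) := by
      rw [key_eq, key_eq, Summable.tsum_sub (summable_f m h j) (summable_f m h i)]
    have e2 : ∑' ℓ, (f m h j ℓ - f m h i ℓ)
        = S1 - ∑' ℓ : ℕ, (C ℓ : ℝ) * ((1:ℝ)/2)^(ℓ+1) := by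
      rw [hS1d, ← Summable.tsum_sub hS1 hS2]
      apply tsum_congr; intro ℓ; rw [hfd ℓ]; ring
    have e3 : ∑' ℓ : ℕ, (C ℓ : ℝ) * ((1:ℝ)/2)^(ℓ+1) = S1 / 2 := by
      rw [Summable.tsum_eq_zero_add hS2, hC0]
      have : ∀ ℓ : ℕ, (C (ℓ+1) : ℝ) * ((1:ℝ)/2)^(ℓ+1+1)
          = (1/2) * ((C (ℓ+1) : ℝ) * ((1:ℝ)/2)^(ℓ+1)) := by
        intro ℓ; ring
      rw [tsum_congr this, tsum_mul_left, ← hS1d]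
      norm_num; ring
    rw [e1, e2, e3]; ring
  -- positivity of S1
  obtain ⟨t, ht1, ht⟩ := exists_step m h hco hh j 0 hh
  have hCt : C t = 1 := by
    have hQ := Nat.div_add_mod (j + t * m) h
    rw [ht] at hQ
    set Q := (j + t * m) / h with hQd
    have hQ1 : 1 ≤ Q := by
      rcases Nat.eq_zero_or_pos Q with h0 | h1
      · exfalso; rw [h0] at hQ; omega
      · exact h1
    have ei : i + t * m = h * (Q - 1) + (h - (j - i)) := by
      have : h * Q = h * (Q - 1) + h := by
        calc h * Q = h * ((Q - 1) + 1) := by rw [Nat.sub_add_cancel hQ1]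
          _ = h * (Q - 1) + h := by ring
      omega
    have : (i + t * m) / h = Q - 1 := by
      rw [ei, Nat.mul_add_div hh, Nat.div_eq_of_lt (by omega)]; omega
    simp only [hC, this, ← hQd]
    omega
  have hS1pos : 0 < S1 := by
    have hterm : ((1:ℝ)/2)^t ≤ S1 := by
      rw [hS1d]
      have := Summable.le_tsum hS1 (t - 1) (fun j _ => by positivity)
      have et : t - 1 + 1 = t := by omega
      rw [et, hCt] at this
      simpa using this
    have : (0:ℝ) < ((1:ℝ)/2)^t := by positivity
    linarith
  linarith

end SKey

namespace SKey

lemma sum_halfpow_odd : ∑' k : ℕ, ((1:ℝ)/2)^(2*k+1) = 2/3 := by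
  have e : ∀ k : ℕ, ((1:ℝ)/2)^(2*k+1) = (1/2) * ((1:ℝ)/4)^k := by
    intro k
    rw [pow_succ, pow_mul]
    norm_num
    ring
  rw [tsum_congr e, tsum_mul_left,
    tsum_geometric_of_lt_one (by norm_num : (0:ℝ) ≤ 1/4) (by norm_num)]
  norm_num

lemma sum_halfpow_even2 : ∑' k : ℕ, ((1:ℝ)/2)^(2*k+2) = 1/3 := by
  have e : ∀ k : ℕ, ((1:ℝ)/2)^(2*k+2) = (1/4) * ((1:ℝ)/4)^k := by
    intro k
    rw [show 2*k+2 = 2*(k+1) by ring, pow_mul, pow_succ]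
    norm_num
    ring
  rw [tsum_congr e, tsum_mul_left,
    tsum_geometric_of_lt_one (by norm_num : (0:ℝ) ≤ 1/4) (by norm_num)]
  norm_num

lemma summable_quarter : Summable (fun k : ℕ => ((1:ℝ)/2)^(2*k+1)) := by
  apply Summable.of_nonneg_of_le (fun k => by positivity) (fun k => ?_)
    ((summable_geometric_of_lt_one (by norm_num : (0:ℝ) ≤ 1/4) (by norm_num)))
  calc ((1:ℝ)/2)^(2*k+1) ≤ ((1:ℝ)/2)^(2*k) :=
        pow_le_pow_of_le_one (by norm_num) (by norm_num) (by omega)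
    _ = ((1:ℝ)/4)^k := by rw [pow_mul]; norm_num

lemma summable_even (m h i : ℕ) : Summable (fun k : ℕ => f m h i (2*k)) := by
  apply Summable.of_nonneg_of_le (fun k => f_nonneg m h i _) (fun k => ?_) summable_quarter
  exact f_le m h i (2*k)

lemma summable_odd (m h i : ℕ) : Summable (fun k : ℕ => f m h i (2*k+1)) := by
  apply Summable.of_nonneg_of_le (fun k => f_nonneg m h i _) (fun k => ?_) summable_quarter
  calc f m h i (2*k+1) ≤ ((1:ℝ)/2)^(2*k+1+1) := f_le m h i _
    _ ≤ ((1:ℝ)/2)^(2*k+1) := pow_le_pow_of_le_one (by norm_num) (by norm_num) (by omega)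

lemma key_pair (m h i : ℕ) :
    simpleKey m h i = ∑' k : ℕ, (f m h i (2*k) + f m h i (2*k+1)) := by
  rw [key_eq, ← tsum_even_add_odd (summable_even m h i) (summable_odd m h i),
    Summable.tsum_add (summable_even m h i) (summable_odd m h i)]

end SKey

namespace SKey

/-- digit step: the next residue -/
lemma digit_next (m h i ℓ : ℕ) (hh : 0 < h) :
    (i + (ℓ+2)*m) % h = ((i + (ℓ+1)*m) % h + m) % h := by
  conv_rhs => rw [Nat.mod_add_mod]
  congr 1; ring

/-- no two consecutive ones when 2m < h -/
lemma no11 (m h i ℓ : ℕ) (h2m : 2*m < h) (hd : (i + (ℓ+1)*m) % h < m) :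
    ¬ (i + (ℓ+2)*m) % h < m := by
  have hh : 0 < h := by omega
  rw [digit_next m h i ℓ hh]
  have hx : (i + (ℓ+1)*m) % h + m < h := by omega
  rw [Nat.mod_eq_of_lt hx]
  omega

/-- no two consecutive zeros when h < 2m -/
lemma no00 (m h i ℓ : ℕ) (hmh : m < h) (h2m : h < 2*m)
    (hd : ¬ (i + (ℓ+1)*m) % h < m) :
    (i + (ℓ+2)*m) % h < m := by
  have hh : 0 < h := by omega
  rw [digit_next m h i ℓ hh]
  have hxh : (i + (ℓ+1)*m) % h < h := Nat.mod_lt _ hh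
  have hge : h ≤ (i + (ℓ+1)*m) % h + m := by omega
  rw [Nat.mod_eq_sub_mod hge, Nat.mod_eq_of_lt (by omega)]
  omega

/-- strict upper bound 2/3 in the sparse case -/
lemma key_lt_twothirds (m h i : ℕ) (h1m : 1 ≤ m) (h2m : 2*m < h)
    (hco : Nat.Coprime m h) : simpleKey m h i < 2/3 := by
  have hh : 0 < h := by omega
  -- pair bound
  have hs_le : ∀ k, f m h i (2*k) + f m h i (2*k+1) ≤ ((1:ℝ)/2)^(2*k+1) := by
    intro k
    by_cases hd : (i + (2*k+1)*m) % h < m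
    · have hd2 : ¬ (i + (2*k+2)*m) % h < m := no11 m h i (2*k) h2m hd
      have e1 : f m h i (2*k) = ((1:ℝ)/2)^(2*k+1) := by unfold f; rw [if_pos hd]
      have e2 : f m h i (2*k+1) = 0 := by
        unfold f; rw [if_neg (by rw [show 2*k+1+1 = 2*k+2 from rfl]; exact hd2)]
      rw [e1, e2, add_zero]
    · have e1 : f m h i (2*k) = 0 := by unfold f; rw [if_neg hd]
      rw [e1, zero_add]
      calc f m h i (2*k+1) ≤ ((1:ℝ)/2)^(2*k+1+1) := f_le m h i _
        _ ≤ ((1:ℝ)/2)^(2*k+1) := pow_le_pow_of_le_one (by norm_num) (by norm_num) (by omega)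
  -- a 00-pair exists
  obtain ⟨t, ht1, ht⟩ := exists_step m h hco hh i m (by omega)
  set ℓ₀ := t - 1 with hℓ₀
  have hd0 : ¬ (i + (ℓ₀+1)*m) % h < m := by
    rw [show ℓ₀ + 1 = t by omega, ht]; omega
  have hd1 : ¬ (i + (ℓ₀+2)*m) % h < m := by
    rw [digit_next m h i ℓ₀ hh, show ℓ₀ + 1 = t by omega, ht,
      Nat.mod_eq_of_lt (by omega)]
    omega
  -- an even index with digit 0
  obtain ⟨k₀, hk₀⟩ : ∃ k₀, ¬ (i + (2*k₀+1)*m) % h < m := by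
    rcases Nat.even_or_odd ℓ₀ with ⟨c, hc⟩ | ⟨c, hc⟩
    · exact ⟨c, by rw [show 2*c = ℓ₀ by omega]; exact hd0⟩
    · exact ⟨c + 1, by rw [show 2*(c+1) = ℓ₀ + 1 by omega, show ℓ₀+1+1 = ℓ₀+2 from rfl]; exact hd1⟩
  have hdef : f m h i (2*k₀) + f m h i (2*k₀+1) + ((1:ℝ)/2)^(2*k₀+2)
      ≤ ((1:ℝ)/2)^(2*k₀+1) := by
    have e1 : f m h i (2*k₀) = 0 := by unfold f; rw [if_neg hk₀]
    have e2 : f m h i (2*k₀+1) ≤ ((1:ℝ)/2)^(2*k₀+2) := f_le m h i _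
    have : ((1:ℝ)/2)^(2*k₀+2) + ((1:ℝ)/2)^(2*k₀+2) = ((1:ℝ)/2)^(2*k₀+1) := by ring
    linarith
  -- summabilities
  have hsum_s : Summable (fun k : ℕ => f m h i (2*k) + f m h i (2*k+1)) :=
    (summable_even m h i).add (summable_odd m h i)
  have := tsum_add_single_le hsum_s summable_quarter hs_le k₀
    (((1:ℝ)/2)^(2*k₀+2)) hdef
  rw [← key_pair m h i, sum_halfpow_odd] at this
  have : (0:ℝ) < ((1:ℝ)/2)^(2*k₀+2) := by positivity
  linarith

/-- lower bound 1/3 in the dense case -/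
lemma key_ge_third (m h i : ℕ) (hmh : m < h) (h2m : h < 2*m) :
    1/3 ≤ simpleKey m h i := by
  have hs_ge : ∀ k, ((1:ℝ)/2)^(2*k+2) ≤ f m h i (2*k) + f m h i (2*k+1) := by
    intro k
    by_cases hd : (i + (2*k+1)*m) % h < m
    · have e1 : f m h i (2*k) = ((1:ℝ)/2)^(2*k+1) := by unfold f; rw [if_pos hd]
      have := f_nonneg m h i (2*k+1)
      have h12 : ((1:ℝ)/2)^(2*k+2) ≤ ((1:ℝ)/2)^(2*k+1) :=
        pow_le_pow_of_le_one (by norm_num) (by norm_num) (by omega)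
      linarith
    · have hd2 : (i + (2*k+2)*m) % h < m := no00 m h i (2*k) hmh h2m hd
      have e2 : f m h i (2*k+1) = ((1:ℝ)/2)^(2*k+2) := by
        unfold f; rw [if_pos (by rw [show 2*k+1+1 = 2*k+2 from rfl]; exact hd2)]
      have := f_nonneg m h i (2*k)
      linarith
  have hsum_s : Summable (fun k : ℕ => f m h i (2*k) + f m h i (2*k+1)) :=
    (summable_even m h i).add (summable_odd m h i)
  have hsq : Summable (fun k : ℕ => ((1:ℝ)/2)^(2*k+2)) := by
    apply Summable.of_nonneg_of_le (fun k => by positivity) (fun k => ?_) summable_quarter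
    exact pow_le_pow_of_le_one (by norm_num) (by norm_num) (by omega)
  have := Summable.tsum_le_tsum hs_ge hsq hsum_s
  rw [← key_pair m h i, sum_halfpow_even2] at this
  exact this

/-- defect upper bound: a single zero digit pushes the key below 1 -/
lemma key_le_of_digit0 (m h i ℓ₀ : ℕ) (hd : ¬ (i + (ℓ₀+1)*m) % h < m) :
    simpleKey m h i ≤ 1 - ((1:ℝ)/2)^(ℓ₀+1) := by
  have hdef : f m h i ℓ₀ + ((1:ℝ)/2)^(ℓ₀+1) ≤ ((1:ℝ)/2)^(ℓ₀+1) := by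
    have e1 : f m h i ℓ₀ = 0 := by unfold f; rw [if_neg hd]
    rw [e1, zero_add]
  have := tsum_add_single_le (summable_f m h i) summable_pow (f_le m h i) ℓ₀
    (((1:ℝ)/2)^(ℓ₀+1)) hdef
  rw [← key_eq, geom_sum] at this
  linarith

end SKey

namespace SKey

lemma coprime_h {m n : ℕ} (hc : Nat.Coprime m n) : Nat.Coprime m (m + n) := by
  simpa using hc

lemma X3 (m₁ n₁ m₂ n₂ : ℕ) (hc₁ : Nat.Coprime m₁ n₁) (hc₂ : Nat.Coprime m₂ n₂)
    (hl1 : m₁ < n₁) (hl2 : n₂ < m₂) (hm₁ : 1 ≤ m₁) :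
    simpleKey m₁ (m₁+n₁) (m₁+n₁-1) < simpleKey m₂ (m₂+n₂) n₂ := by
  set h₁ := m₁ + n₁ with hh₁
  set h₂ := m₂ + n₂ with hh₂
  have hco₁ : Nat.Coprime m₁ h₁ := coprime_h hc₁
  have hco₂ : Nat.Coprime m₂ h₂ := coprime_h hc₂
  -- A side
  have dA1 : (h₁ - 1 + m₁) % h₁ = m₁ - 1 := by
    rw [show h₁ - 1 + m₁ = h₁ + (m₁ - 1) by omega, Nat.add_mod_left,
      Nat.mod_eq_of_lt (by omega)]
  have rA1 : simpleKey m₁ h₁ (h₁-1) = (1 + simpleKey m₁ h₁ (m₁-1)) / 2 := by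
    rw [key_rec m₁ h₁ (h₁-1), dA1, if_pos (by omega)]
  have dA2 : (m₁ - 1 + m₁) % h₁ = 2*m₁ - 1 := by
    rw [show m₁ - 1 + m₁ = 2*m₁ - 1 by omega, Nat.mod_eq_of_lt (by omega)]
  have rA2 : simpleKey m₁ h₁ (m₁-1) = simpleKey m₁ h₁ (2*m₁-1) / 2 := by
    rw [key_rec m₁ h₁ (m₁-1), dA2, if_neg (by omega)]
    ring
  have hU : simpleKey m₁ h₁ (2*m₁-1) < 2/3 :=
    key_lt_twothirds m₁ h₁ _ hm₁ (by omega) hco₁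
  have hA : simpleKey m₁ h₁ (h₁-1) < 2/3 := by
    rw [rA1, rA2]; linarith
  -- B side
  rcases Nat.eq_zero_or_pos n₂ with hz | hn₂
  · have hm2 : m₂ = 1 := by
      rw [hz] at hc₂; simpa [Nat.coprime_zero_right] using hc₂
    have hB1 : simpleKey m₂ h₂ n₂ = 1 := by
      rw [hz, hm2, show h₂ = 1 by omega]; exact key_one_one 0
    rw [hB1]; linarith
  · have dB1 : (n₂ + m₂) % h₂ = 0 := by
      rw [show n₂ + m₂ = h₂ by omega, Nat.mod_self]
    have rB1 : simpleKey m₂ h₂ n₂ = (1 + simpleKey m₂ h₂ 0) / 2 := by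
      rw [key_rec m₂ h₂ n₂, dB1, if_pos (by omega)]
    have hL : 1/3 ≤ simpleKey m₂ h₂ 0 := key_ge_third m₂ h₂ 0 (by omega) (by omega)
    rw [rB1]; linarith

end SKey

namespace SKey

lemma X1 (m₁ n₁ m₂ n₂ : ℕ) (hc₁ : Nat.Coprime m₁ n₁) (hc₂ : Nat.Coprime m₂ n₂)
    (hl1 : m₁ < n₁) (hl2 : n₂ < m₂) (hn₂ : 1 ≤ n₂) :
    simpleKey m₁ (m₁+n₁) (n₁-1) < simpleKey m₂ (m₂+n₂) 0 := by
  set h₁ := m₁ + n₁ with hh₁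
  set h₂ := m₂ + n₂ with hh₂
  have hco₂ : Nat.Coprime m₂ h₂ := coprime_h hc₂
  have hL : 1/3 ≤ simpleKey m₂ h₂ 0 := key_ge_third m₂ h₂ 0 (by omega) (by omega)
  rcases Nat.eq_zero_or_pos m₁ with hz | hm₁
  · have hn1 : n₁ = 1 := by
      rw [hz] at hc₁; simpa [Nat.coprime_zero_left] using hc₁
    have : simpleKey m₁ h₁ (n₁-1) = 0 := by rw [hz]; exact key_zero_left _ _
    rw [this]; linarith
  · -- recursion at n₁ - 1
    have dA : (n₁ - 1 + m₁) % h₁ = h₁ - 1 := by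
      rw [show n₁ - 1 + m₁ = h₁ - 1 by omega, Nat.mod_eq_of_lt (by omega)]
    have rA : simpleKey m₁ h₁ (n₁-1) = simpleKey m₁ h₁ (h₁-1) / 2 := by
      rw [key_rec m₁ h₁ (n₁-1), dA, if_neg (by omega)]; ring
    have dB : (0 + m₂) % h₂ = m₂ := by
      rw [Nat.zero_add, Nat.mod_eq_of_lt (by omega)]
    have rB : simpleKey m₂ h₂ 0 = simpleKey m₂ h₂ m₂ / 2 := by
      rw [key_rec m₂ h₂ 0, dB, if_neg (by omega)]; ring
    have hX3 : simpleKey m₁ h₁ (h₁-1) < simpleKey m₂ h₂ n₂ :=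
      X3 m₁ n₁ m₂ n₂ hc₁ hc₂ hl1 hl2 hm₁
    have hmono : simpleKey m₂ h₂ n₂ ≤ simpleKey m₂ h₂ m₂ :=
      le_of_lt (key_strictMono m₂ h₂ (by omega) hco₂ hl2 (by omega))
    rw [rA, rB]; linarith

lemma X2 (m₁ n₁ m₂ n₂ : ℕ) (hc₁ : Nat.Coprime m₁ n₁) (hc₂ : Nat.Coprime m₂ n₂)
    (hl1 : m₁ < n₁) (hl2 : n₂ < m₂) (hn₂ : 1 ≤ n₂) (hm₁ : 1 ≤ m₁) :
    simpleKey m₂ (m₂+n₂) (n₂-1) < simpleKey m₁ (m₁+n₁) n₁ := by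
  set h₁ := m₁ + n₁ with hh₁
  set h₂ := m₂ + n₂ with hh₂
  have hco₂ : Nat.Coprime m₂ h₂ := coprime_h hc₂
  have dB : (n₂ - 1 + m₂) % h₂ = h₂ - 1 := by
    rw [show n₂ - 1 + m₂ = h₂ - 1 by omega, Nat.mod_eq_of_lt (by omega)]
  have rB : simpleKey m₂ h₂ (n₂-1) = simpleKey m₂ h₂ (h₂-1) / 2 := by
    rw [key_rec m₂ h₂ (n₂-1), dB, if_neg (by omega)]; ring
  -- strict bound key_B (h₂-1) < 1
  obtain ⟨t, ht1, ht⟩ := exists_step m₂ h₂ hco₂ (by omega) (h₂-1) m₂ (by omega)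
  have hd0 : ¬ (h₂ - 1 + (t - 1 + 1) * m₂) % h₂ < m₂ := by
    rw [show t - 1 + 1 = t by omega, ht]; omega
  have hBlt : simpleKey m₂ h₂ (h₂-1) ≤ 1 - ((1:ℝ)/2)^(t-1+1) :=
    key_le_of_digit0 m₂ h₂ (h₂-1) (t-1) hd0
  have hpow : (0:ℝ) < ((1:ℝ)/2)^(t-1+1) := by positivity
  -- A side
  have dA : (n₁ + m₁) % h₁ = 0 := by
    rw [show n₁ + m₁ = h₁ by omega, Nat.mod_self]
  have rA : simpleKey m₁ h₁ n₁ = (1 + simpleKey m₁ h₁ 0) / 2 := by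
    rw [key_rec m₁ h₁ n₁, dA, if_pos (by omega)]
  have h0 := key_nonneg m₁ h₁ 0
  rw [rA, rB]; linarith

end SKey

namespace SKey

lemma strictMono_of_adj {N : ℕ} {g : Fin N → ℝ}
    (H : ∀ k (hk : k + 1 < N), g ⟨k, by omega⟩ < g ⟨k+1, hk⟩) : StrictMono g := by
  have key : ∀ d a (ha : a < N) (hb : a + d + 1 < N), g ⟨a, ha⟩ < g ⟨a+d+1, hb⟩ := by
    intro d
    induction d with
    | zero => intro a ha hb; exact H a hb
    | succ d ih =>
      intro a ha hb
      have h1 : a + d + 1 < N := by omega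
      exact lt_trans (ih a ha h1) (H (a+d+1) hb)
  intro a b hab
  obtain ⟨a, ha⟩ := a; obtain ⟨b, hb⟩ := b
  have hab' : a < b := Fin.mk_lt_mk.mp hab
  have e : (⟨b, hb⟩ : Fin N) = ⟨a + (b - a - 1) + 1, by omega⟩ := by
    apply Fin.ext; simp; omega
  rw [e]
  exact key (b - a - 1) a ha (by omega)

end SKey


/-- The merged block sequence `1^{m₁} 0^{n₁−m₁} 1^{n₂} 0^{m₁} 1^{m₂−n₂} 0^{n₂}`. -/
def mergedSeq (m₁ n₁ n₂ m₂ : ℕ) (k : ℕ) : Bool :=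
  if k < m₁ then true
  else if k < n₁ then false
  else if k < n₁ + n₂ then true
  else if k < n₁ + n₂ + m₁ then false
  else if k < n₁ + n₂ + m₁ + (m₂ - n₂) then true
  else false

/-- Which positions of the merged sequence come from `A` (the blocks
`1^{m₁}`, `0^{n₁−m₁}` and the later `0^{m₁}`); the rest come from `B`. -/
def fromA (m₁ n₁ n₂ : ℕ) (k : ℕ) : Bool :=
  decide (k < n₁ ∨ (n₁ + n₂ ≤ k ∧ k < n₁ + n₂ + m₁))

set_option maxHeartbeats 2000000

open SKey

/-- Binary-expansion merge of `A = A_{m₁,n₁}` and `B = A_{m₂,n₂}` when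
`λ₂ < 1/2 < λ₁` (i.e. `m₁ < n₁` and `n₂ < m₂`): sorting all positions of `A`
and `B` in (strictly) ascending order of their keys `b_A`, `b_B` yields the
sequence `1^{m₁} 0^{n₁−m₁} 1^{n₂} 0^{m₁} 1^{m₂−n₂} 0^{n₂}`, with the indicated
blocks coming from `A` and `B` respectively. -/
theorem merge_simple_sequences (m₁ n₁ m₂ n₂ : ℕ)
    (hc₁ : Nat.Coprime m₁ n₁) (hc₂ : Nat.Coprime m₂ n₂)
    (hp₁ : 1 ≤ m₁ + n₁) (hp₂ : 1 ≤ m₂ + n₂)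
    (hl1 : m₁ < n₁) (hl2 : n₂ < m₂) :
    ∃ e : Fin ((m₁ + n₁) + (m₂ + n₂)) ≃ (Fin (m₁ + n₁) ⊕ Fin (m₂ + n₂)),
      StrictMono (fun k => Sum.elim
        (fun i : Fin (m₁ + n₁) => simpleKey m₁ (m₁ + n₁) i)
        (fun j : Fin (m₂ + n₂) => simpleKey m₂ (m₂ + n₂) j) (e k)) ∧
      (∀ k, Sum.elim
        (fun i : Fin (m₁ + n₁) => decide ((i : ℕ) < m₁))
        (fun j : Fin (m₂ + n₂) => decide ((j : ℕ) < m₂)) (e k) =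
          mergedSeq m₁ n₁ n₂ m₂ k) ∧
      (∀ k, (e k).isLeft = fromA m₁ n₁ n₂ k) := by
  have hm10 : m₁ = 0 → n₁ = 1 := fun h => by
    rw [h] at hc₁; simpa [Nat.coprime_zero_left] using hc₁
  have hn20 : n₂ = 0 → m₂ = 1 := fun h => by
    rw [h] at hc₂; simpa [Nat.coprime_zero_right] using hc₂
  have hco₁ : Nat.Coprime m₁ (m₁ + n₁) := coprime_h hc₁
  have hco₂ : Nat.Coprime m₂ (m₂ + n₂) := coprime_h hc₂
  refine ⟨⟨
    fun k => if h1 : (k : ℕ) < n₁ then Sum.inl ⟨k, by omega⟩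
      else if h2 : (k : ℕ) < n₁ + n₂ then Sum.inr ⟨(k : ℕ) - n₁, by omega⟩
      else if h3 : (k : ℕ) < n₁ + n₂ + m₁ then Sum.inl ⟨(k : ℕ) - n₂, by omega⟩
      else Sum.inr ⟨(k : ℕ) - (m₁ + n₁), by have := k.isLt; omega⟩,
    fun s => Sum.rec
      (fun i => if (i : ℕ) < n₁ then ⟨i, by omega⟩ else ⟨(i : ℕ) + n₂, by have := i.isLt; omega⟩)
      (fun j => if (j : ℕ) < n₂ then ⟨n₁ + (j : ℕ), by omega⟩
        else ⟨m₁ + n₁ + (j : ℕ), by have := j.isLt; omega⟩) s,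
    ?_, ?_⟩, ?_, ?_, ?_⟩
  · -- left inverse
    rintro ⟨k, hk⟩
    dsimp only
    split_ifs with h1 h2 h3 <;> dsimp only <;> split_ifs <;>
      (apply Fin.ext; dsimp only) <;> omega
  · -- right inverse
    rintro (⟨i, hi⟩ | ⟨j, hj⟩)
    · dsimp only
      by_cases hin : i < n₁
      · rw [if_pos hin]
        dsimp only
        rw [dif_pos hin]
      · rw [if_neg hin]
        dsimp only
        rw [dif_neg (show ¬ i + n₂ < n₁ by omega),
          dif_neg (show ¬ i + n₂ < n₁ + n₂ by omega),
          dif_pos (show i + n₂ < n₁ + n₂ + m₁ by omega)]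
        simp only [Sum.inl.injEq, Fin.mk.injEq]
        omega
    · dsimp only
      by_cases hjn : j < n₂
      · rw [if_pos hjn]
        dsimp only
        rw [dif_neg (show ¬ n₁ + j < n₁ by omega),
          dif_pos (show n₁ + j < n₁ + n₂ by omega)]
        simp only [Sum.inr.injEq, Fin.mk.injEq]
        omega
      · rw [if_neg hjn]
        dsimp only
        rw [dif_neg (show ¬ m₁ + n₁ + j < n₁ by omega),
          dif_neg (show ¬ m₁ + n₁ + j < n₁ + n₂ by omega),
          dif_neg (show ¬ m₁ + n₁ + j < n₁ + n₂ + m₁ by omega)]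
        simp only [Sum.inr.injEq, Fin.mk.injEq]
        omega
  · -- strict monotonicity
    apply strictMono_of_adj
    intro k hk
    simp only [Equiv.coe_fn_mk]
    have hcase : k + 1 < n₁ ∨ k + 1 = n₁ ∨ (n₁ ≤ k ∧ k + 1 < n₁ + n₂)
        ∨ (n₁ ≤ k ∧ k + 1 = n₁ + n₂) ∨ (n₁ + n₂ ≤ k ∧ k + 1 < n₁ + n₂ + m₁)
        ∨ (n₁ + n₂ ≤ k ∧ k + 1 = n₁ + n₂ + m₁) ∨ (n₁ + n₂ + m₁ ≤ k) := by omega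
    rcases hcase with hc | hc | ⟨hca, hcb⟩ | ⟨hca, hcb⟩ | ⟨hca, hcb⟩ | ⟨hca, hcb⟩ | hc
    · -- both in A-first region
      rw [dif_pos (show k < n₁ by omega), dif_pos (show k + 1 < n₁ by omega)]
      simp only [Sum.elim_inl]
      exact key_strictMono m₁ (m₁+n₁) (by omega) hco₁ (by omega) (by omega)
    · -- boundary k+1 = n₁
      rw [dif_pos (show k < n₁ by omega), dif_neg (show ¬ k + 1 < n₁ by omega)]
      by_cases hn2 : 1 ≤ n₂
      · rw [dif_pos (show k + 1 < n₁ + n₂ by omega)]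
        simp only [Sum.elim_inl, Sum.elim_inr]
        have := X1 m₁ n₁ m₂ n₂ hc₁ hc₂ hl1 hl2 hn2
        convert this using 2 <;> omega
      · rw [dif_neg (show ¬ k + 1 < n₁ + n₂ by omega)]
        by_cases hm1 : 1 ≤ m₁
        · rw [dif_pos (show k + 1 < n₁ + n₂ + m₁ by omega)]
          simp only [Sum.elim_inl]
          exact key_strictMono m₁ (m₁+n₁) (by omega) hco₁ (by omega) (by omega)
        · rw [dif_neg (show ¬ k + 1 < n₁ + n₂ + m₁ by omega)]
          simp only [Sum.elim_inl, Sum.elim_inr]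
          have hA : simpleKey m₁ (m₁+n₁) k = 0 := by
            rw [show m₁ = 0 by omega]; exact key_zero_left _ _
          have hB : simpleKey m₂ (m₂+n₂) (k + 1 - (m₁+n₁)) = 1 := by
            rw [show m₂ = 1 from hn20 (by omega), show n₂ = 0 by omega]
            exact key_one_one _
          rw [hA, hB]; norm_num
    · -- both in B-first region
      rw [dif_neg (show ¬ k < n₁ by omega), dif_pos (show k < n₁ + n₂ by omega),
        dif_neg (show ¬ k + 1 < n₁ by omega), dif_pos (show k + 1 < n₁ + n₂ by omega)]
      simp only [Sum.elim_inr]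
      exact key_strictMono m₂ (m₂+n₂) (by omega) hco₂ (by omega) (by omega)
    · -- boundary k+1 = n₁ + n₂
      have hn2 : 1 ≤ n₂ := by omega
      rw [dif_neg (show ¬ k < n₁ by omega), dif_pos (show k < n₁ + n₂ by omega),
        dif_neg (show ¬ k + 1 < n₁ by omega), dif_neg (show ¬ k + 1 < n₁ + n₂ by omega)]
      by_cases hm1 : 1 ≤ m₁
      · rw [dif_pos (show k + 1 < n₁ + n₂ + m₁ by omega)]
        simp only [Sum.elim_inl, Sum.elim_inr]
        have := X2 m₁ n₁ m₂ n₂ hc₁ hc₂ hl1 hl2 hn2 hm1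
        convert this using 2 <;> omega
      · rw [dif_neg (show ¬ k + 1 < n₁ + n₂ + m₁ by omega)]
        simp only [Sum.elim_inr]
        exact key_strictMono m₂ (m₂+n₂) (by omega) hco₂ (by omega) (by omega)
    · -- both in A-second region
      rw [dif_neg (show ¬ k < n₁ by omega), dif_neg (show ¬ k < n₁ + n₂ by omega),
        dif_pos (show k < n₁ + n₂ + m₁ by omega),
        dif_neg (show ¬ k + 1 < n₁ by omega), dif_neg (show ¬ k + 1 < n₁ + n₂ by omega),
        dif_pos (show k + 1 < n₁ + n₂ + m₁ by omega)]
      simp only [Sum.elim_inl]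
      exact key_strictMono m₁ (m₁+n₁) (by omega) hco₁ (by omega) (by omega)
    · -- boundary k+1 = n₁ + n₂ + m₁
      have hm1 : 1 ≤ m₁ := by omega
      rw [dif_neg (show ¬ k < n₁ by omega), dif_neg (show ¬ k < n₁ + n₂ by omega),
        dif_pos (show k < n₁ + n₂ + m₁ by omega),
        dif_neg (show ¬ k + 1 < n₁ by omega), dif_neg (show ¬ k + 1 < n₁ + n₂ by omega),
        dif_neg (show ¬ k + 1 < n₁ + n₂ + m₁ by omega)]
      simp only [Sum.elim_inl, Sum.elim_inr]
      have := X3 m₁ n₁ m₂ n₂ hc₁ hc₂ hl1 hl2 hm1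
      convert this using 2 <;> omega
    · -- both in B-second region
      rw [dif_neg (show ¬ k < n₁ by omega), dif_neg (show ¬ k < n₁ + n₂ by omega),
        dif_neg (show ¬ k < n₁ + n₂ + m₁ by omega),
        dif_neg (show ¬ k + 1 < n₁ by omega), dif_neg (show ¬ k + 1 < n₁ + n₂ by omega),
        dif_neg (show ¬ k + 1 < n₁ + n₂ + m₁ by omega)]
      simp only [Sum.elim_inr]
      by_cases hn2 : 1 ≤ n₂
      · exact key_strictMono m₂ (m₂+n₂) (by omega) hco₂ (by omega) (by omega)
      · exfalso
        have := hn20 (by omega)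
        omega
  · -- bits
    rintro ⟨k, hk⟩
    simp only [Equiv.coe_fn_mk]
    have hcase : k < n₁ ∨ (n₁ ≤ k ∧ k < n₁ + n₂) ∨ (n₁ + n₂ ≤ k ∧ k < n₁ + n₂ + m₁)
        ∨ (n₁ + n₂ + m₁ ≤ k) := by omega
    rcases hcase with hc | ⟨hca, hcb⟩ | ⟨hca, hcb⟩ | hc
    · rw [dif_pos (show k < n₁ by omega)]
      simp only [Sum.elim_inl, mergedSeq]
      split_ifs <;> simp <;> omega
    · rw [dif_neg (show ¬ k < n₁ by omega), dif_pos (show k < n₁ + n₂ by omega)]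
      simp only [Sum.elim_inr, mergedSeq]
      split_ifs <;> simp <;> omega
    · rw [dif_neg (show ¬ k < n₁ by omega), dif_neg (show ¬ k < n₁ + n₂ by omega),
        dif_pos (show k < n₁ + n₂ + m₁ by omega)]
      simp only [Sum.elim_inl, mergedSeq]
      split_ifs <;> simp <;> omega
    · rw [dif_neg (show ¬ k < n₁ by omega), dif_neg (show ¬ k < n₁ + n₂ by omega),
        dif_neg (show ¬ k < n₁ + n₂ + m₁ by omega)]
      simp only [Sum.elim_inr, mergedSeq]
      split_ifs <;> simp <;> omega
  · -- fromA
    rintro ⟨k, hk⟩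
    simp only [Equiv.coe_fn_mk]
    have hcase : k < n₁ ∨ (n₁ ≤ k ∧ k < n₁ + n₂) ∨ (n₁ + n₂ ≤ k ∧ k < n₁ + n₂ + m₁)
        ∨ (n₁ + n₂ + m₁ ≤ k) := by omega
    rcases hcase with hc | ⟨hca, hcb⟩ | ⟨hca, hcb⟩ | hc
    · rw [dif_pos (show k < n₁ by omega)]
      simp only [Sum.isLeft_inl, fromA]
      simp; omega
    · rw [dif_neg (show ¬ k < n₁ by omega), dif_pos (show k < n₁ + n₂ by omega)]
      simp only [Sum.isLeft_inr, fromA]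
      simp; omega
    · rw [dif_neg (show ¬ k < n₁ by omega), dif_neg (show ¬ k < n₁ + n₂ by omega),
        dif_pos (show k < n₁ + n₂ + m₁ by omega)]
      simp only [Sum.isLeft_inl, fromA]
      simp; omega
    · rw [dif_neg (show ¬ k < n₁ by omega), dif_neg (show ¬ k < n₁ + n₂ by omega),
        dif_neg (show ¬ k < n₁ + n₂ + m₁ by omega)]
      simp only [Sum.isLeft_inr, fromA]
      simp; omega
end

section
/- Let ξ = (m₁,n₁)+(m₂,n₂) and ζ = (m₁',n₁') + ζ'' be Newton polygons with the same endpoints where ζ ≺ ξ is saturated, m₁' ≤ m₁, n₁' ≤ n₁, and ζ' := ζ'' , ξ' := (m₁ − m₁', n₁ − n₁') + (m₂, n₂) are again Newton polygons with ζ' ≺ ξ'. Then c(ζ, ξ) = c(ζ', ξ') + (n₁·m₁' − m₁·n₁'), where c(·,·) is twice the sum of the differences of the two polygon functions at integer points (equivalently, the area between the polygons). -/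
/-!
The sum `S l` of the values of a segment line graph at the integer points `1, …, segHeight l`
is additive under concatenation up to the vertical shift of the second piece:
`S (l₁ ++ l₂) = S l₁ + S l₂ + segHeight l₂ * segDim l₁`, and a single segment `(m, n)` gives
`2 * S = n * (m + n + 1)`. As `c` is twice a difference of such sums, splitting off the first
segments of `ζ`, `ξ` and `ξ'` reduces the identity to polynomial algebra.
-/

/-- The slope `n/(m+n)` of a segment `(m,n)`. -/
def NPslope (p : ℕ × ℕ) : ℚ := (p.2 : ℚ) / ((p.1 : ℚ) + (p.2 : ℚ))

/-- A Newton polygon: a finite (ordered, by decreasing slope) collection of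
coprime pairs `(m,n)` of nonnegative integers. -/
structure NewtonPolygon where
  segs : List (ℕ × ℕ)
  coprime : ∀ p ∈ segs, Nat.Coprime p.1 p.2
  sorted : segs.Pairwise (fun p q => NPslope q ≤ NPslope p)

namespace NewtonPolygon

/-- The height `∑ (mᵢ + nᵢ)`. -/
def height (ξ : NewtonPolygon) : ℕ := (ξ.segs.map (fun p => p.1 + p.2)).sum

/-- The dimension `∑ nᵢ`. -/
def dim (ξ : NewtonPolygon) : ℕ := (ξ.segs.map Prod.snd).sum

/-- The value at the integer point `i` of the line graph given by a list of
segments laid out from left to right. -/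
def valAux : List (ℕ × ℕ) → ℕ → ℚ
  | [], _ => 0
  | p :: rest, i =>
      if i ≤ p.1 + p.2 then (p.2 : ℚ) * i / ((p.1 : ℚ) + p.2)
      else (p.2 : ℚ) + valAux rest (i - (p.1 + p.2))

/-- The value of the Newton polygon (as a line graph starting at `(0,0)`, with
segments in increasing slope order from the left) at the integer point `i`. -/
def val (ξ : NewtonPolygon) (i : ℕ) : ℚ := valAux ξ.segs.reverse i

/-- `ζ ≺ ξ` : same endpoints, and `ζ` lies on or above `ξ`. -/
def Prec (ζ ξ : NewtonPolygon) : Prop :=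
  ζ.height = ξ.height ∧ ζ.dim = ξ.dim ∧ ∀ i ≤ ξ.height, ξ.val i ≤ ζ.val i

/-- `c(ζ,ξ) = 2·∑_{i=1}^{h} (ζ(i) − ξ(i))`. -/
def c (ζ ξ : NewtonPolygon) : ℚ :=
  2 * ∑ i ∈ Finset.Icc 1 ξ.height, (ζ.val i - ξ.val i)

/-- `ζ ≺ ξ` is saturated: no Newton polygon lies strictly between them. -/
def Saturated (ζ ξ : NewtonPolygon) : Prop :=
  Prec ζ ξ ∧ ∀ η : NewtonPolygon, Prec ζ η → Prec η ξ →
    (∀ i, η.val i = ζ.val i) ∨ (∀ i, η.val i = ξ.val i)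

end NewtonPolygon

namespace NewtonPolygon

def segHeight (l : List (ℕ × ℕ)) : ℕ := (l.map fun p => p.1 + p.2).sum

def segDim (l : List (ℕ × ℕ)) : ℕ := (l.map Prod.snd).sum

def valSum (l : List (ℕ × ℕ)) : ℚ := ∑ i ∈ Finset.range (segHeight l), valAux l (i + 1)

@[simp] lemma segHeight_nil : segHeight [] = 0 := rfl

@[simp] lemma segHeight_cons (p : ℕ × ℕ) (l : List (ℕ × ℕ)) :
    segHeight (p :: l) = p.1 + p.2 + segHeight l := by
  simp [segHeight]

@[simp] lemma segHeight_append (l₁ l₂ : List (ℕ × ℕ)) :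
    segHeight (l₁ ++ l₂) = segHeight l₁ + segHeight l₂ := by
  simp [segHeight]

@[simp] lemma segDim_nil : segDim [] = 0 := rfl

@[simp] lemma segDim_cons (p : ℕ × ℕ) (l : List (ℕ × ℕ)) :
    segDim (p :: l) = p.2 + segDim l := by
  simp [segDim]

@[simp] lemma segDim_append (l₁ l₂ : List (ℕ × ℕ)) :
    segDim (l₁ ++ l₂) = segDim l₁ + segDim l₂ := by
  simp [segDim]

lemma height_eq_segHeight_reverse (ξ : NewtonPolygon) :
    ξ.height = segHeight ξ.segs.reverse := by
  simp [height, segHeight, List.map_reverse]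

lemma dim_eq_segDim_reverse (ξ : NewtonPolygon) : ξ.dim = segDim ξ.segs.reverse := by
  simp [dim, segDim, List.map_reverse]

lemma valAux_append_of_le {l₁ : List (ℕ × ℕ)} (l₂ : List (ℕ × ℕ)) {i : ℕ}
    (h : i ≤ segHeight l₁) : valAux (l₁ ++ l₂) i = valAux l₁ i := by
  induction l₁ generalizing i with
  | nil =>
    obtain rfl : i = 0 := by simpa using h
    cases l₂ <;> simp [valAux]
  | cons p l₁ ih =>
    simp only [segHeight_cons] at h
    simp only [List.cons_append, valAux]
    split_ifs
    · rfl
    · rw [ih (by omega)]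

-- Strictly past the junction, so that no quotient `n * i / (m + n)` is ever evaluated.
lemma valAux_append_add_succ (l₁ l₂ : List (ℕ × ℕ)) (j : ℕ) :
    valAux (l₁ ++ l₂) (segHeight l₁ + (j + 1)) = segDim l₁ + valAux l₂ (j + 1) := by
  induction l₁ with
  | nil => simp [segDim]
  | cons p l₁ ih =>
    simp only [List.cons_append, valAux, segHeight_cons, segDim_cons]
    rw [if_neg (by omega), show p.1 + p.2 + segHeight l₁ + (j + 1) - (p.1 + p.2)
      = segHeight l₁ + (j + 1) by omega, ih]
    push_cast
    ring

lemma valSum_append (l₁ l₂ : List (ℕ × ℕ)) :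
    valSum (l₁ ++ l₂) = valSum l₁ + valSum l₂ + segHeight l₂ * segDim l₁ := by
  have hleft : ∑ i ∈ Finset.range (segHeight l₁), valAux (l₁ ++ l₂) (i + 1) = valSum l₁ :=
    Finset.sum_congr rfl fun i hi => valAux_append_of_le l₂ (by simp at hi; omega)
  have hright : ∑ j ∈ Finset.range (segHeight l₂), valAux (l₁ ++ l₂) (segHeight l₁ + j + 1)
      = valSum l₂ + segHeight l₂ * segDim l₁ := by
    simp_rw [add_assoc, valAux_append_add_succ, Finset.sum_add_distrib, valSum]
    simp [add_comm]
  rw [valSum, segHeight_append, Finset.sum_range_add, hleft, hright, add_assoc]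

lemma valSum_singleton (m n : ℕ) : 2 * valSum [(m, n)] = n * (m + n + 1) := by
  rcases Nat.eq_zero_or_pos (m + n) with hzero | hpos
  · obtain ⟨rfl, rfl⟩ : m = 0 ∧ n = 0 := by omega
    simp [valSum]
  have hterm : ∀ i ∈ Finset.range (m + n),
      valAux [(m, n)] (i + 1) = n / (m + n) * ((i : ℚ) + 1) := by
    intro i hi
    rw [valAux, if_pos (by simp at hi; omega)]
    push_cast
    ring
  have hgauss : ∀ N : ℕ, 2 * ∑ i ∈ Finset.range N, ((i : ℚ) + 1) = N * (N + 1) := by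
    intro N
    induction N with
    | zero => simp
    | succ N ih => rw [Finset.sum_range_succ, mul_add, ih]; push_cast; ring
  have hsum := hgauss (m + n)
  have hne : (m : ℚ) + n ≠ 0 := by exact_mod_cast hpos.ne'
  simp only [valSum, segHeight_cons, segHeight_nil, add_zero]
  rw [Finset.sum_congr rfl hterm, ← Finset.mul_sum]
  push_cast at hsum
  field_simp
  linear_combination (n : ℚ) * hsum

lemma c_eq_of_height_eq {ζ ξ : NewtonPolygon} (h : ζ.height = ξ.height) :
    c ζ ξ = 2 * (valSum ζ.segs.reverse - valSum ξ.segs.reverse) := by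
  rw [c, Finset.sum_sub_distrib, valSum, valSum, ← height_eq_segHeight_reverse,
    ← height_eq_segHeight_reverse, h]
  simp only [Finset.range_eq_Ico, Finset.sum_Ico_add', ← Finset.Ico_add_one_right_eq_Icc, val]

end NewtonPolygon

open NewtonPolygon in
theorem c_induction_step_general (m₁ n₁ m₂ n₂ m₁' n₁' : ℕ)
    (ζ ξ ζ' ξ' : NewtonPolygon)
    (hξ : ξ.segs = [(m₁, n₁), (m₂, n₂)])
    (hζ : ζ.segs = (m₁', n₁') :: ζ'.segs)
    (hξ' : ξ'.segs = [(m₁ - m₁', n₁ - n₁'), (m₂, n₂)])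
    (hm : m₁' ≤ m₁) (hn : n₁' ≤ n₁)
    (hprec : Prec ζ' ξ') :
    c ζ ξ = c ζ' ξ' + ((n₁ : ℚ) * m₁' - (m₁ : ℚ) * n₁') := by
  obtain ⟨hheight, hdim, -⟩ := hprec
  have hζrev : ζ.segs.reverse = ζ'.segs.reverse ++ [(m₁', n₁')] := by simp [hζ]
  have hξrev : ξ.segs.reverse = [(m₂, n₂)] ++ [(m₁, n₁)] := by simp [hξ]
  have hξ'rev : ξ'.segs.reverse = [(m₂, n₂)] ++ [(m₁ - m₁', n₁ - n₁')] := by simp [hξ']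
  have hζheight : ζ.height = ξ.height := by
    simp only [height_eq_segHeight_reverse, hζrev, hξrev, hξ'rev, segHeight_append,
      segHeight_cons, segHeight_nil] at hheight ⊢
    omega
  have hζ'dim : segDim ζ'.segs.reverse = n₂ + (n₁ - n₁') := by
    simpa [dim_eq_segDim_reverse, hξ'rev] using hdim
  rw [c_eq_of_height_eq hζheight, c_eq_of_height_eq hheight, hζrev, hξrev, hξ'rev]
  simp only [valSum_append, segHeight_cons, segHeight_nil, segDim_cons, segDim_nil, hζ'dim]
  have hζtop := valSum_singleton m₁' n₁'
  have hξtop := valSum_singleton m₁ n₁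
  have hξ'top := valSum_singleton (m₁ - m₁') (n₁ - n₁')
  push_cast [Nat.cast_sub hm, Nat.cast_sub hn] at hξ'top ⊢
  linear_combination hζtop - hξtop + hξ'top

open NewtonPolygon in
/-- Inductive step: removing the steepest segment `(m₁',n₁')` of `ζ` and
shortening the first segment of `ξ = (m₁,n₁)+(m₂,n₂)` accordingly,
`c(ζ,ξ) = c(ζ',ξ') + (n₁m₁' − m₁n₁')`. -/
theorem c_induction_step (m₁ n₁ m₂ n₂ m₁' n₁' : ℕ)
    (ζ ξ ζ' ξ' : NewtonPolygon)
    (hξ : ξ.segs = [(m₁, n₁), (m₂, n₂)])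
    (hζ : ζ.segs = (m₁', n₁') :: ζ'.segs)
    (hξ' : ξ'.segs = [(m₁ - m₁', n₁ - n₁'), (m₂, n₂)])
    (hm : m₁' ≤ m₁) (hn : n₁' ≤ n₁)
    (hsat : Saturated ζ ξ) (hprec : Prec ζ' ξ') :
    c ζ ξ = c ζ' ξ' + ((n₁ : ℚ) * m₁' - (m₁ : ℚ) * n₁') :=
  c_induction_step_general m₁ n₁ m₂ n₂ m₁' n₁' ζ ξ ζ' ξ' hξ hζ hξ' hm hn hprec
end
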